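/- arXiv:1906.01317 — 3 statements merged into one kernel-verified Lean document; each statement's English description precedes it below -/
import Mathlib

section
/- Let N ≥ 5 and a₁, a₂, a₂' ∈ ℝ. The function (Φ₁ − Φ₂)(x) = (1/(4(N−4))) (x_N−1)/(|x̄|² + (x_N+1)²)^{(N−4)/2} + a₁ (x_N+1)/(|x̄|² + (x_N+1)²)^{N/2} + a₂ / (|x̄|² + (x_N+1)²)^{(N−2)/2} + a₂' satisfies −Δ(Φ₁ − Φ₂)(x) = x_N / (|x̄|² + (x_N+1)²)^{(N−2)/2} = x_N W_{1,0}(x) for all x ∈ ℝ^N_+. -/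
/-! With `q x = |x̄|² + (x_N + 1)²` one has `|∇q|² = 4q` and `Δq = 2N`, so the product and chain
rules for `Δ` give, for every affine function `ℓ = a x_N + b`,
`Δ(ℓ q^α) = 2α ((2α + N - 2) ℓ + 2a (x_N + 1)) q^(α - 1)`.
Hence `(x_N + 1) q^(-N/2)` and `q^(-(N-2)/2)` are harmonic, while for `α = -(N-4)/2`
`Δ((x_N - 1) q^α) = -4(N - 4) x_N q^(-(N-2)/2)`. -/

open MeasureTheory Filter Topology

noncomputable section

/-- The model for `ℝ^N_+`: pairs `(x̄, t)` with `x̄ ∈ ℝ^n` (Euclidean) and `t ∈ ℝ`;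
the open upper half-space is `{p | 0 < p.2}`. -/
abbrev HSp (n : ℕ) := EuclideanSpace ℝ (Fin n) × ℝ

/-- The open upper half-space. -/
def upperHalf (n : ℕ) : Set (HSp n) := {p | 0 < p.2}

/-- Directional derivative of `f` at `x` in direction `v`. -/
def pdv {n : ℕ} (v : HSp n) (f : HSp n → ℝ) (x : HSp n) : ℝ := fderiv ℝ f x v

/-- The `i`-th horizontal standard basis vector. -/
def eH {n : ℕ} (i : Fin n) : HSp n := (EuclideanSpace.single i 1, 0)

/-- The vertical standard basis vector. -/
def eV {n : ℕ} : HSp n := (0, 1)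

/-- The Laplacian `Δf = ∑ᵢ ∂ᵢᵢ f + ∂_NN f`. -/
def lap {n : ℕ} (f : HSp n → ℝ) (x : HSp n) : ℝ :=
  (∑ i : Fin n, pdv (eH i) (pdv (eH i) f) x) + pdv eV (pdv eV f) x

/-- The Euclidean length `|x|` of a point `x = (x̄, t)`. -/
def rad {n : ℕ} (x : HSp n) : ℝ := Real.sqrt (‖x.1‖ ^ 2 + x.2 ^ 2)

/-- The bubble `W_{λ,ξ}`. -/
def Bub (N : ℕ) (lam : ℝ) (ξ : EuclideanSpace ℝ (Fin (N - 1))) (x : HSp (N - 1)) : ℝ :=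
  lam ^ (((N : ℝ) - 2) / 2) / (‖x.1 - ξ‖ ^ 2 + (x.2 + lam) ^ 2) ^ (((N : ℝ) - 2) / 2)

/-- The trace `w_{λ,ξ}` of the bubble on the boundary. -/
def bub (N : ℕ) (lam : ℝ) (ξ y : EuclideanSpace ℝ (Fin (N - 1))) : ℝ := Bub N lam ξ (y, 0)

section Calculus

variable {n : ℕ} {f g : HSp n → ℝ} {x y v : HSp n}

lemma pdv_congr (h : f =ᶠ[𝓝 y] g) : pdv v f y = pdv v g y := by
  rw [pdv, pdv, h.fderiv_eq]

lemma pdv_add (hf : DifferentiableAt ℝ f y) (hg : DifferentiableAt ℝ g y) :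
    pdv v (fun z => f z + g z) y = pdv v f y + pdv v g y := by
  simp [pdv, fderiv_fun_add hf hg]

lemma pdv_const_mul (hf : DifferentiableAt ℝ f y) (c : ℝ) :
    pdv v (fun z => c * f z) y = c * pdv v f y := by
  simp [pdv, fderiv_const_mul hf]

lemma pdv_mul (hf : DifferentiableAt ℝ f y) (hg : DifferentiableAt ℝ g y) :
    pdv v (fun z => f z * g z) y = pdv v f y * g y + f y * pdv v g y := by
  simp only [pdv, fderiv_fun_mul hf hg, add_apply, smul_apply, smul_eq_mul]
  ring

lemma pdv_rpow_const (hf : DifferentiableAt ℝ f y) (hy : f y ≠ 0) (p : ℝ) :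
    pdv v (fun z => f z ^ p) y = p * f y ^ (p - 1) * pdv v f y := by
  simp [pdv, (hf.hasFDerivAt.rpow_const (p := p) (Or.inl hy)).fderiv]

lemma ContDiffAt.eventually_differentiableAt (hf : ContDiffAt ℝ 2 f x) :
    ∀ᶠ y in 𝓝 x, DifferentiableAt ℝ f y :=
  (hf.eventually (by simp)).mono fun _ hy => hy.differentiableAt (by simp)

lemma ContDiffAt.differentiableAt_pdv (hf : ContDiffAt ℝ 2 f x) (v : HSp n) :
    DifferentiableAt ℝ (pdv v f) x :=
  ((hf.fderiv_right (m := 1) (by norm_num)).clm_apply contDiffAt_const).differentiableAt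
    one_ne_zero

lemma pdv_pdv_add (hf : ContDiffAt ℝ 2 f x) (hg : ContDiffAt ℝ 2 g x) :
    pdv v (pdv v fun z => f z + g z) x = pdv v (pdv v f) x + pdv v (pdv v g) x := by
  have h : pdv v (fun z => f z + g z) =ᶠ[𝓝 x] fun z => pdv v f z + pdv v g z := by
    filter_upwards [hf.eventually_differentiableAt, hg.eventually_differentiableAt] with z hfz hgz
    exact pdv_add hfz hgz
  rw [pdv_congr h, pdv_add (hf.differentiableAt_pdv v) (hg.differentiableAt_pdv v)]

lemma pdv_pdv_mul (hf : ContDiffAt ℝ 2 f x) (hg : ContDiffAt ℝ 2 g x) :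
    pdv v (pdv v fun z => f z * g z) x =
      pdv v (pdv v f) x * g x + 2 * (pdv v f x * pdv v g x) + f x * pdv v (pdv v g) x := by
  have hf₁ := hf.differentiableAt (by simp)
  have hg₁ := hg.differentiableAt (by simp)
  have h : pdv v (fun z => f z * g z) =ᶠ[𝓝 x] fun z => pdv v f z * g z + f z * pdv v g z := by
    filter_upwards [hf.eventually_differentiableAt, hg.eventually_differentiableAt] with z hfz hgz
    exact pdv_mul hfz hgz
  rw [pdv_congr h, pdv_add ((hf.differentiableAt_pdv v).fun_mul hg₁)
      (hf₁.fun_mul (hg.differentiableAt_pdv v)),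
    pdv_mul (hf.differentiableAt_pdv v) hg₁, pdv_mul hf₁ (hg.differentiableAt_pdv v)]
  ring

lemma pdv_pdv_rpow_const (hf : ContDiffAt ℝ 2 f x) (hx : f x ≠ 0) (p : ℝ) :
    pdv v (pdv v fun z => f z ^ p) x =
      p * (p - 1) * f x ^ (p - 2) * pdv v f x ^ 2 + p * f x ^ (p - 1) * pdv v (pdv v f) x := by
  have hf₁ := hf.differentiableAt (by simp)
  have h : pdv v (fun z => f z ^ p) =ᶠ[𝓝 x] fun z => p * (f z ^ (p - 1) * pdv v f z) := by
    filter_upwards [hf.eventually_differentiableAt, hf.continuousAt.eventually_ne hx]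
      with z hfz hz
    rw [pdv_rpow_const hfz hz, mul_assoc]
  rw [pdv_congr h, pdv_const_mul ((hf₁.rpow_const (Or.inl hx)).fun_mul (hf.differentiableAt_pdv v)),
    pdv_mul (hf₁.rpow_const (Or.inl hx)) (hf.differentiableAt_pdv v), pdv_rpow_const hf₁ hx,
    show p - 1 - 1 = p - 2 by ring]
  ring

end Calculus

section Laplacian

variable {n : ℕ} {f g : HSp n → ℝ} {x : HSp n}

def gradDot (f g : HSp n → ℝ) (x : HSp n) : ℝ :=
  (∑ i, pdv (eH i) f x * pdv (eH i) g x) + pdv eV f x * pdv eV g x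

lemma lap_add_const (f : HSp n → ℝ) (c : ℝ) (x : HSp n) :
    lap (fun y => f y + c) x = lap f x := by
  have h (v : HSp n) : pdv v (fun y => f y + c) = pdv v f :=
    funext fun y => by simp only [pdv, fderiv_add_const]
  simp only [lap, h]

lemma lap_add (hf : ContDiffAt ℝ 2 f x) (hg : ContDiffAt ℝ 2 g x) :
    lap (fun y => f y + g y) x = lap f x + lap g x := by
  simp only [lap, pdv_pdv_add hf hg, Finset.sum_add_distrib]
  ring

lemma lap_mul (hf : ContDiffAt ℝ 2 f x) (hg : ContDiffAt ℝ 2 g x) :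
    lap (fun y => f y * g y) x = lap f x * g x + 2 * gradDot f g x + f x * lap g x := by
  simp only [lap, gradDot, pdv_pdv_mul hf hg, Finset.sum_add_distrib, ← Finset.sum_mul,
    ← Finset.mul_sum]
  ring

lemma lap_rpow_const (hf : ContDiffAt ℝ 2 f x) (hx : f x ≠ 0) (p : ℝ) :
    lap (fun y => f y ^ p) x =
      p * (p - 1) * f x ^ (p - 2) * gradDot f f x + p * f x ^ (p - 1) * lap f x := by
  simp only [lap, gradDot, pdv_pdv_rpow_const hf hx, Finset.sum_add_distrib, ← Finset.mul_sum, sq]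
  ring

end Laplacian

section Bubble

variable {n : ℕ}

def sqDistCenter (n : ℕ) (y : HSp n) : ℝ := ‖y.1‖ ^ 2 + (y.2 + 1) ^ 2

lemma contDiff_sqDistCenter : ContDiff ℝ 2 (sqDistCenter n) :=
  ((contDiff_norm_sq ℝ).comp contDiff_fst).add (by fun_prop)

lemma pdv_sqDistCenter (v y : HSp n) :
    pdv v (sqDistCenter n) y = 2 * (inner ℝ y.1 v.1 + (y.2 + 1) * v.2) := by
  have h : HasFDerivAt (sqDistCenter n) _ y :=
    (hasFDerivAt_fst (p := y)).norm_sq.fun_add ((hasFDerivAt_snd.add_const 1).pow 2)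
  simp only [pdv, h.fderiv, Nat.add_one_sub_one, pow_one, smul_add, nsmul_eq_mul, Nat.cast_ofNat,
    mul_one, add_apply, smul_apply, ContinuousLinearMap.comp_apply, ContinuousLinearMap.coe_fst',
    coe_innerSL_apply, ContinuousLinearMap.coe_snd', smul_eq_mul]
  ring

lemma pdv_pdv_sqDistCenter (v y : HSp n) :
    pdv v (pdv v (sqDistCenter n)) y = 2 * (‖v.1‖ ^ 2 + v.2 ^ 2) := by
  have h : pdv v (sqDistCenter n) = fun z => 2 * (inner ℝ z.1 v.1 + (z.2 + 1) * v.2) :=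
    funext (pdv_sqDistCenter v)
  have hinner : HasFDerivAt (fun z : HSp n => inner ℝ z.1 v.1)
      ((innerSL ℝ v.1).comp (ContinuousLinearMap.fst ℝ _ ℝ)) y := by
    refine ((innerSL ℝ v.1).comp (ContinuousLinearMap.fst ℝ _ ℝ)).hasFDerivAt.congr_of_eventuallyEq
      (.of_forall fun z => real_inner_comm _ _)
  have hlin := (hinner.fun_add ((hasFDerivAt_snd.add_const 1).mul_const v.2)).const_mul 2
  rw [h, pdv, hlin.fderiv]
  simp only [smul_add, add_apply, smul_apply, ContinuousLinearMap.comp_apply,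
    ContinuousLinearMap.coe_fst', coe_innerSL_apply, inner_self_eq_norm_sq_to_K, Real.ringHom_apply,
    smul_eq_mul, ContinuousLinearMap.coe_snd']
  ring

lemma lap_sqDistCenter (x : HSp n) : lap (sqDistCenter n) x = 2 * (n + 1) := by
  simp only [lap, eH, eV, pdv_pdv_sqDistCenter, PiLp.norm_single, norm_one, norm_zero,
    Finset.sum_const, Finset.card_univ, Fintype.card_fin, nsmul_eq_mul]
  ring

lemma gradDot_sqDistCenter (x : HSp n) :
    gradDot (sqDistCenter n) (sqDistCenter n) x = 4 * sqDistCenter n x := by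
  simp only [gradDot, eH, eV, pdv_sqDistCenter, EuclideanSpace.inner_single_right,
    Real.ringHom_apply, inner_zero_right, sqDistCenter, EuclideanSpace.real_norm_sq_eq]
  rw [mul_add (4 : ℝ), Finset.mul_sum]
  ring_nf

lemma pdv_affine (a b : ℝ) (v y : HSp n) : pdv v (fun z => a * z.2 + b) y = a * v.2 := by
  have h := ((hasFDerivAt_snd (𝕜 := ℝ) (p := y)).const_mul a).add_const b
  simp [pdv, h.fderiv]

lemma gradDot_affine (a b : ℝ) (g : HSp n → ℝ) (x : HSp n) :
    gradDot (fun z => a * z.2 + b) g x = a * pdv eV g x := by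
  simp [gradDot, pdv_affine, eH, eV]

lemma lap_affine (a b : ℝ) (x : HSp n) : lap (fun z => a * z.2 + b) x = 0 := by
  have h (v : HSp n) : pdv v (fun z => a * z.2 + b) = fun _ => a * v.2 := funext (pdv_affine a b v)
  simp [lap, h, pdv]

lemma contDiffAt_affine_mul_rpow (a b p : ℝ) {x : HSp n} (hx : sqDistCenter n x ≠ 0) :
    ContDiffAt ℝ 2 (fun y => (a * y.2 + b) * sqDistCenter n y ^ p) x :=
  (by fun_prop : ContDiffAt ℝ 2 (fun y : HSp n => a * y.2 + b) x).mul
    (contDiff_sqDistCenter.contDiffAt.rpow_const_of_ne hx)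

lemma lap_affine_mul_rpow (a b p : ℝ) {x : HSp n} (hx : sqDistCenter n x ≠ 0) :
    lap (fun y => (a * y.2 + b) * sqDistCenter n y ^ p) x =
      2 * p * ((2 * p + n - 1) * (a * x.2 + b) + 2 * a * (x.2 + 1)) *
        sqDistCenter n x ^ (p - 1) := by
  have hq := contDiff_sqDistCenter (n := n).contDiffAt (x := x)
  rw [lap_mul (by fun_prop) (hq.rpow_const_of_ne hx), lap_affine, gradDot_affine,
    pdv_rpow_const (hq.differentiableAt (by simp)) hx, pdv_sqDistCenter, lap_rpow_const hq hx,
    gradDot_sqDistCenter, lap_sqDistCenter,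
    show p - 2 = p - 1 - 1 by ring, Real.rpow_sub_one hx (p - 1)]
  simp only [eV, inner_zero_right]
  field_simp
  ring

end Bubble

/-- `-Δ(Φ₁ - Φ₂) = x_N/(|x̄|² + (x_N+1)²)^{(N-2)/2} = x_N W_{1,0}` in the
upper half-space. -/
theorem Phi1_sub_Phi2_solves (N : ℕ) (hN : 5 ≤ N) (a₁ a₂ a₂' : ℝ) (Φ : HSp (N - 1) → ℝ)
    (hΦ : ∀ x : HSp (N - 1), Φ x =
      1 / (4 * ((N : ℝ) - 4)) * (x.2 - 1)
          / (‖x.1‖ ^ 2 + (x.2 + 1) ^ 2) ^ (((N : ℝ) - 4) / 2)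
        + a₁ * (x.2 + 1) / (‖x.1‖ ^ 2 + (x.2 + 1) ^ 2) ^ ((N : ℝ) / 2)
        + a₂ / (‖x.1‖ ^ 2 + (x.2 + 1) ^ 2) ^ (((N : ℝ) - 2) / 2)
        + a₂') :
    ∀ x ∈ upperHalf (N - 1),
      -(lap Φ x) = x.2 / (‖x.1‖ ^ 2 + (x.2 + 1) ^ 2) ^ (((N : ℝ) - 2) / 2) ∧
      x.2 / (‖x.1‖ ^ 2 + (x.2 + 1) ^ 2) ^ (((N : ℝ) - 2) / 2) = x.2 * Bub N 1 0 x := by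
  intro x hx
  refine ⟨?_, by simp [Bub, div_eq_mul_inv]⟩
  have hq : 0 < sqDistCenter (N - 1) x :=
    add_pos_of_nonneg_of_pos (by positivity) (by have : 0 < x.2 := hx; positivity)
  have hN4 : (N : ℝ) - 4 ≠ 0 := by
    have : (5 : ℝ) ≤ N := by exact_mod_cast hN
    linarith
  set c := 1 / (4 * ((N : ℝ) - 4)) with hc
  have hΦ_eq : Φ = fun y => (c * y.2 + -c) * sqDistCenter (N - 1) y ^ (-(((N : ℝ) - 4) / 2))
      + (a₁ * y.2 + a₁) * sqDistCenter (N - 1) y ^ (-((N : ℝ) / 2))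
      + (0 * y.2 + a₂) * sqDistCenter (N - 1) y ^ (-(((N : ℝ) - 2) / 2)) + a₂' := by
    funext y
    simp only [hΦ, sqDistCenter, Real.rpow_neg (by positivity : 0 ≤ ‖y.1‖ ^ 2 + (y.2 + 1) ^ 2)]
    ring
  have hreg (a b p : ℝ) := contDiffAt_affine_mul_rpow a b p hq.ne'
  rw [hΦ_eq, lap_add_const, lap_add ((hreg _ _ _).add (hreg _ _ _)) (hreg _ _ _),
    lap_add (hreg _ _ _) (hreg _ _ _), lap_affine_mul_rpow _ _ _ hq.ne',
    lap_affine_mul_rpow _ _ _ hq.ne', lap_affine_mul_rpow _ _ _ hq.ne',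
    show -(((N : ℝ) - 4) / 2) - 1 = -(((N : ℝ) - 2) / 2) by ring,
    show ‖x.1‖ ^ 2 + (x.2 + 1) ^ 2 = sqDistCenter (N - 1) x from rfl, Real.rpow_neg hq.le,
    Nat.cast_sub (by omega : 1 ≤ N), Nat.cast_one, hc]
  field_simp
  ring
end
end

section
/- Let N ≥ 4, ε > 0, a₁, a₂ ∈ ℝ, and let π = (π_ij) be a symmetric trace-free real (N−1)×(N−1) matrix. With Φ as in the decomposition lemma, there exists a constant C > 0 depending only on N, a₁ and a₂ such that for all x in the closed upper half-space ℝ^N_+: |Φ(x)| ≤ C ε |π|_∞ / (1 + |x|^{N−3}) and |∇Φ(x)| ≤ C ε |π|_∞ / (1 + |x|^{N−2}), where |π|_∞ = max_{i,j} |π_ij|. -/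
/-!
Write `σ(x) = |x + e_N| = √(|x̄|² + (x_N + 1)²)`; on the closed half-space `σ ≥ 1` and `σ ≥ |x|`.
Say that `f` has order `k` at `x` with constant `c` if `|f x| ≤ c σ^k` and `‖Df(x)‖ ≤ c σ^(k-1)`.
Orders add under products and survive sums, scalar multiples and real powers of `σ²`, so from
the building blocks `x_i`, `x_N ± 1` (order 1) and `σ²` (order 2) the function
`Φ = ε (π_ij x_i x_j) σ^(-N) [⋯]` gets order `2 - N + 1 = 3 - N`, with a constant proportional
to `ε |π|_∞`. Since `1 + |x|^m ≤ 2 σ^m`, this is the claimed decay.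
-/

open MeasureTheory Filter Topology

noncomputable section

section SymbolCalculus

open Real

variable {E : Type*} [NormedAddCommGroup E] [NormedSpace ℝ E]

structure SymbolBoundAt (σ k c : ℝ) (f : E → ℝ) (x : E) : Prop where
  differentiableAt : DifferentiableAt ℝ f x
  abs_le : |f x| ≤ c * σ ^ k
  norm_fderiv_le : ‖fderiv ℝ f x‖ ≤ c * σ ^ (k - 1)

variable {σ k l c d : ℝ} {f g : E → ℝ} {x : E}

theorem symbolBoundAt_of_hasFDerivAt {f' : E →L[ℝ] ℝ} (hf : HasFDerivAt f f' x)
    (h₀ : |f x| ≤ c * σ ^ k) (h₁ : ‖f'‖ ≤ c * σ ^ (k - 1)) : SymbolBoundAt σ k c f x :=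
  ⟨hf.differentiableAt, h₀, hf.fderiv ▸ h₁⟩

theorem symbolBoundAt_one_of_hasFDerivAt {f' : E →L[ℝ] ℝ} (hf : HasFDerivAt f f' x)
    (hf' : ‖f'‖ ≤ 1) (hfx : |f x| ≤ σ) : SymbolBoundAt σ 1 1 f x :=
  symbolBoundAt_of_hasFDerivAt hf (by simpa using hfx) (by simpa using hf')

theorem symbolBoundAt_norm_sq_of_hasFDerivAt {F : Type*} [NormedAddCommGroup F]
    [InnerProductSpace ℝ F] {f : E → F} {f' : E →L[ℝ] F} (hf : HasFDerivAt f f' x)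
    (hf' : ‖f'‖ ≤ 1) (hfx : ‖f x‖ ≤ σ) : SymbolBoundAt σ 2 2 (fun y => ‖f y‖ ^ 2) x := by
  have hσ : 0 ≤ σ := (norm_nonneg _).trans hfx
  have hL : ‖(innerSL ℝ (f x)).comp f'‖ ≤ σ :=
    calc ‖(innerSL ℝ (f x)).comp f'‖ ≤ ‖f x‖ * ‖f'‖ := by
          simpa only [innerSL_apply_norm] using (innerSL ℝ (f x)).opNorm_comp_le f'
      _ ≤ σ * 1 := mul_le_mul hfx hf' (norm_nonneg _) hσ
      _ = σ := mul_one σ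
  refine symbolBoundAt_of_hasFDerivAt hf.norm_sq ?_ ?_
  · rw [abs_of_nonneg (by positivity), rpow_two]
    nlinarith [pow_le_pow_left₀ (norm_nonneg _) hfx 2]
  · rw [two_nsmul, show (2 : ℝ) - 1 = 1 by norm_num, rpow_one]
    linarith [norm_add_le ((innerSL ℝ (f x)).comp f') ((innerSL ℝ (f x)).comp f')]

namespace SymbolBoundAt

theorem const_nonneg (h : SymbolBoundAt σ k c f x) (hσ : 0 < σ) : 0 ≤ c :=
  nonneg_of_mul_nonneg_left ((abs_nonneg _).trans h.abs_le) (rpow_pos_of_pos hσ k)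

theorem mono (h : SymbolBoundAt σ k c f x) (hσ : 1 ≤ σ) (hkl : k ≤ l) (hcd : c ≤ d) :
    SymbolBoundAt σ l d f x := by
  have hc := h.const_nonneg (by linarith)
  refine ⟨h.differentiableAt, h.abs_le.trans ?_, h.norm_fderiv_le.trans ?_⟩ <;> gcongr <;>
    linarith

theorem add (hf : SymbolBoundAt σ k c f x) (hg : SymbolBoundAt σ k d g x) :
    SymbolBoundAt σ k (c + d) (fun y => f y + g y) x := by
  refine ⟨hf.differentiableAt.add hg.differentiableAt, ?_, ?_⟩
  · rw [add_mul]
    exact (abs_add_le _ _).trans (add_le_add hf.abs_le hg.abs_le)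
  · rw [fderiv_fun_add hf.differentiableAt hg.differentiableAt, add_mul]
    exact (norm_add_le _ _).trans (add_le_add hf.norm_fderiv_le hg.norm_fderiv_le)

theorem sum {ι : Type*} (s : Finset ι) {c : ι → ℝ} {f : ι → E → ℝ}
    (h : ∀ i ∈ s, SymbolBoundAt σ k (c i) (f i) x) :
    SymbolBoundAt σ k (∑ i ∈ s, c i) (fun y => ∑ i ∈ s, f i y) x := by
  refine ⟨DifferentiableAt.fun_sum fun i hi => (h i hi).differentiableAt, ?_, ?_⟩
  · rw [Finset.sum_mul]
    exact (Finset.abs_sum_le_sum_abs _ _).trans (Finset.sum_le_sum fun i hi => (h i hi).abs_le)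
  · rw [fderiv_fun_sum fun i hi => (h i hi).differentiableAt, Finset.sum_mul]
    exact (norm_sum_le _ _).trans (Finset.sum_le_sum fun i hi => (h i hi).norm_fderiv_le)

theorem const_mul (a : ℝ) (h : SymbolBoundAt σ k c f x) :
    SymbolBoundAt σ k (|a| * c) (fun y => a * f y) x := by
  refine ⟨h.differentiableAt.const_mul a, ?_, ?_⟩
  · rw [abs_mul, mul_assoc]
    exact mul_le_mul_of_nonneg_left h.abs_le (abs_nonneg a)
  · rw [fderiv_const_mul h.differentiableAt, norm_smul, Real.norm_eq_abs, mul_assoc]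
    exact mul_le_mul_of_nonneg_left h.norm_fderiv_le (abs_nonneg a)

theorem mul (hf : SymbolBoundAt σ k c f x) (hg : SymbolBoundAt σ l d g x) (hσ : 0 < σ) :
    SymbolBoundAt σ (k + l) (2 * c * d) (fun y => f y * g y) x := by
  have hc := hf.const_nonneg hσ
  have hd := hg.const_nonneg hσ
  refine ⟨hf.differentiableAt.mul hg.differentiableAt, ?_, ?_⟩
  · rw [abs_mul, rpow_add hσ]
    have : 0 ≤ c * d * (σ ^ k * σ ^ l) := by positivity
    calc |f x| * |g x| ≤ c * σ ^ k * (d * σ ^ l) :=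
          mul_le_mul hf.abs_le hg.abs_le (abs_nonneg _) (by positivity)
      _ ≤ 2 * c * d * (σ ^ k * σ ^ l) := by linarith
  · rw [fderiv_fun_mul hf.differentiableAt hg.differentiableAt]
    have h₁ : σ ^ (k + l - 1) = σ ^ k * σ ^ (l - 1) := by rw [← rpow_add hσ]; ring_nf
    have h₂ : σ ^ (k + l - 1) = σ ^ l * σ ^ (k - 1) := by rw [← rpow_add hσ]; ring_nf
    calc ‖f x • fderiv ℝ g x + g x • fderiv ℝ f x‖
        ≤ |f x| * ‖fderiv ℝ g x‖ + |g x| * ‖fderiv ℝ f x‖ := by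
          refine (norm_add_le _ _).trans_eq ?_
          rw [norm_smul, norm_smul, Real.norm_eq_abs, Real.norm_eq_abs]
      _ ≤ c * σ ^ k * (d * σ ^ (l - 1)) + d * σ ^ l * (c * σ ^ (k - 1)) := by
          gcongr
          exacts [hf.abs_le, hg.norm_fderiv_le, hg.abs_le, hf.norm_fderiv_le]
      _ = c * d * (σ ^ k * σ ^ (l - 1)) + c * d * (σ ^ l * σ ^ (k - 1)) := by ring
      _ = 2 * c * d * σ ^ (k + l - 1) := by rw [← h₁, ← h₂]; ring

theorem rpow (h : SymbolBoundAt σ k c f x) (hfx : f x = σ ^ k) (hσ : 0 < σ) (p : ℝ) :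
    SymbolBoundAt σ (k * p) (1 + |p| * c) (fun y => f y ^ p) x := by
  have hc := h.const_nonneg hσ
  have hfx₀ : f x ≠ 0 := hfx ▸ (rpow_pos_of_pos hσ k).ne'
  refine symbolBoundAt_of_hasFDerivAt (h.differentiableAt.hasFDerivAt.rpow_const (Or.inl hfx₀))
    ?_ ?_
  · rw [hfx, ← rpow_mul hσ.le, abs_of_nonneg (rpow_nonneg hσ.le _)]
    have : 0 ≤ |p| * c * σ ^ (k * p) := by positivity
    linarith
  · have hsplit : σ ^ (k * p - 1) = σ ^ (k * (p - 1)) * σ ^ (k - 1) := by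
      rw [← rpow_add hσ]; ring_nf
    rw [norm_smul, Real.norm_eq_abs, abs_mul, hfx, ← rpow_mul hσ.le,
      abs_of_nonneg (rpow_nonneg hσ.le _)]
    calc |p| * σ ^ (k * (p - 1)) * ‖fderiv ℝ f x‖
        ≤ |p| * σ ^ (k * (p - 1)) * (c * σ ^ (k - 1)) := by gcongr; exact h.norm_fderiv_le
      _ = |p| * c * σ ^ (k * p - 1) := by rw [hsplit]; ring
      _ ≤ (1 + |p| * c) * σ ^ (k * p - 1) := by
          nlinarith [rpow_nonneg hσ.le (k * p - 1)]

end SymbolBoundAt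

theorem mul_rpow_neg_le_two_mul_div {σ r a : ℝ} (m : ℕ) (hσ : 1 ≤ σ) (hr : 0 ≤ r)
    (hrσ : r ≤ σ) (ha : 0 ≤ a) : a * σ ^ (-(m : ℝ)) ≤ 2 * a / (1 + r ^ m) := by
  have hσm : 1 ≤ σ ^ m := one_le_pow₀ hσ
  have hrm : r ^ m ≤ σ ^ m := pow_le_pow_left₀ hr hrσ m
  rw [rpow_neg (by linarith), rpow_natCast, le_div_iff₀ (by positivity)]
  calc a * (σ ^ m)⁻¹ * (1 + r ^ m) ≤ a * (σ ^ m)⁻¹ * (2 * σ ^ m) := by gcongr; linarith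
    _ = 2 * a := by field_simp

end SymbolCalculus

section HalfSpace

variable {n : ℕ}

def shiftedNormSq (y : HSp n) : ℝ := ‖y.1‖ ^ 2 + (y.2 + 1) ^ 2

def shiftedNorm (y : HSp n) : ℝ := √(shiftedNormSq y)

variable (x : HSp n)

theorem shiftedNormSq_eq_rpow_two : shiftedNormSq x = shiftedNorm x ^ (2 : ℝ) := by
  rw [Real.rpow_two, shiftedNorm, Real.sq_sqrt (by unfold shiftedNormSq; positivity)]

theorem norm_fst_le_shiftedNorm : ‖x.1‖ ≤ shiftedNorm x :=
  Real.le_sqrt_of_sq_le (by unfold shiftedNormSq; nlinarith [sq_nonneg (x.2 + 1)])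

theorem abs_snd_add_one_le_shiftedNorm : |x.2 + 1| ≤ shiftedNorm x :=
  Real.abs_le_sqrt (by unfold shiftedNormSq; nlinarith [sq_nonneg ‖x.1‖])

theorem symbolBoundAt_shiftedNormSq : SymbolBoundAt (shiftedNorm x) 2 4 shiftedNormSq x := by
  have h₁ := symbolBoundAt_norm_sq_of_hasFDerivAt (hasFDerivAt_fst (p := x))
    (ContinuousLinearMap.norm_fst_le ℝ (EuclideanSpace ℝ (Fin n)) ℝ) (norm_fst_le_shiftedNorm x)
  have h₂ := symbolBoundAt_norm_sq_of_hasFDerivAt ((hasFDerivAt_snd (p := x)).add_const 1)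
    (ContinuousLinearMap.norm_snd_le ℝ (EuclideanSpace ℝ (Fin n)) ℝ)
    (by simpa only [Real.norm_eq_abs] using abs_snd_add_one_le_shiftedNorm x)
  convert h₁.add h₂ using 1
  · norm_num
  · ext y
    simp only [shiftedNormSq, Real.norm_eq_abs, sq_abs]

theorem symbolBoundAt_coord (i : Fin n) :
    SymbolBoundAt (shiftedNorm x) 1 1 (fun y : HSp n => y.1 i) x := by
  refine symbolBoundAt_one_of_hasFDerivAt ((EuclideanSpace.proj i).comp
    (ContinuousLinearMap.fst ℝ (EuclideanSpace ℝ (Fin n)) ℝ)).hasFDerivAt ?_ ?_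
  · refine ContinuousLinearMap.opNorm_le_bound _ zero_le_one fun v => ?_
    simpa using (PiLp.norm_apply_le v.1 i).trans (norm_fst_le v)
  · simpa only [Real.norm_eq_abs] using
      (PiLp.norm_apply_le x.1 i).trans (norm_fst_le_shiftedNorm x)

variable {x}

theorem one_le_shiftedNorm (hx : 0 ≤ x.2) : 1 ≤ shiftedNorm x :=
  Real.le_sqrt_of_sq_le (by unfold shiftedNormSq; nlinarith [sq_nonneg ‖x.1‖])

theorem rad_le_shiftedNorm (hx : 0 ≤ x.2) : rad x ≤ shiftedNorm x :=
  Real.sqrt_le_sqrt (by unfold shiftedNormSq; nlinarith)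

theorem abs_snd_sub_one_le_shiftedNorm (hx : 0 ≤ x.2) : |x.2 - 1| ≤ shiftedNorm x :=
  calc |x.2 - 1| ≤ |x.2 + 1| := by
        rw [abs_of_nonneg (by linarith : 0 ≤ x.2 + 1), abs_le]
        constructor <;> linarith
    _ ≤ shiftedNorm x := abs_snd_add_one_le_shiftedNorm x

def quadForm (π : Fin n → Fin n → ℝ) (y : HSp n) : ℝ := ∑ i, ∑ j, π i j * y.1 i * y.1 j

def bracketTerm (N : ℕ) (a₁ a₂ : ℝ) (y : HSp n) : ℝ :=
  ((N : ℝ) - 2) / 2 * (y.2 - 1) + a₁ * (y.2 + 1) * shiftedNormSq y ^ (-2 : ℝ)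
    + a₂ * shiftedNormSq y ^ (-1 : ℝ)

def Phi (N : ℕ) (ε a₁ a₂ : ℝ) (π : Fin n → Fin n → ℝ) (y : HSp n) : ℝ :=
  ε * (quadForm π y * shiftedNormSq y ^ (-((N : ℝ) / 2)) * bracketTerm N a₁ a₂ y)

theorem Phi_apply (N : ℕ) (ε a₁ a₂ : ℝ) (π : Fin n → Fin n → ℝ) (y : HSp n) :
    Phi N ε a₁ a₂ π y =
      ε * (∑ i, ∑ j, π i j * y.1 i * y.1 j) / (‖y.1‖ ^ 2 + (y.2 + 1) ^ 2) ^ ((N : ℝ) / 2) *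
        (((N : ℝ) - 2) / 2 * (y.2 - 1) + a₁ * (y.2 + 1) / (‖y.1‖ ^ 2 + (y.2 + 1) ^ 2) ^ 2
          + a₂ / (‖y.1‖ ^ 2 + (y.2 + 1) ^ 2)) := by
  have hD : 0 ≤ shiftedNormSq y := by unfold shiftedNormSq; positivity
  rw [Phi, bracketTerm, Real.rpow_neg hD, Real.rpow_neg hD, Real.rpow_neg_one, Real.rpow_two,
    quadForm, shiftedNormSq]
  ring

theorem symbolBoundAt_quadForm (hx : 0 ≤ x.2) {π : Fin n → Fin n → ℝ} {M : ℝ}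
    (hπ : ∀ i j, |π i j| ≤ M) :
    SymbolBoundAt (shiftedNorm x) 2 (2 * n ^ 2 * M) (quadForm π) x := by
  have hσ := one_le_shiftedNorm hx
  have h := SymbolBoundAt.sum Finset.univ fun i _ => SymbolBoundAt.sum Finset.univ fun j _ =>
    ((symbolBoundAt_coord x i).const_mul (π i j)).mul (symbolBoundAt_coord x j) (by linarith)
  refine h.mono hσ (by norm_num) ?_
  calc ∑ i, ∑ j, 2 * (|π i j| * 1) * 1 ≤ ∑ _i : Fin n, ∑ _j : Fin n, 2 * M :=
        Finset.sum_le_sum fun i _ => Finset.sum_le_sum fun j _ => by linarith [hπ i j]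
    _ = 2 * n ^ 2 * M := by
        simp only [Finset.sum_const, Finset.card_univ, Fintype.card_fin, nsmul_eq_mul]
        ring

theorem symbolBoundAt_bracketTerm (N : ℕ) (a₁ a₂ : ℝ) (hx : 0 ≤ x.2) :
    SymbolBoundAt (shiftedNorm x) 1 (N + 1 + 18 * |a₁| + 5 * |a₂|) (bracketTerm N a₁ a₂) x := by
  have hσ := one_le_shiftedNorm hx
  have hσ₀ : 0 < shiftedNorm x := by linarith
  have hD := (symbolBoundAt_shiftedNormSq x).rpow (shiftedNormSq_eq_rpow_two x) hσ₀
  have hsnd := ContinuousLinearMap.norm_snd_le ℝ (EuclideanSpace ℝ (Fin n)) ℝ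
  have h₁ := (symbolBoundAt_one_of_hasFDerivAt ((hasFDerivAt_snd (p := x)).sub_const 1) hsnd
    (abs_snd_sub_one_le_shiftedNorm hx)).const_mul (((N : ℝ) - 2) / 2)
  have h₂ := ((symbolBoundAt_one_of_hasFDerivAt ((hasFDerivAt_snd (p := x)).add_const 1) hsnd
    (abs_snd_add_one_le_shiftedNorm x)).const_mul a₁).mul (hD (-2)) hσ₀
  have h₃ := (hD (-1)).const_mul a₂
  have hN : |((N : ℝ) - 2) / 2| ≤ N + 1 :=
    abs_le.2 ⟨by linarith [N.cast_nonneg (α := ℝ)], by linarith⟩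
  refine ((h₁.add (h₂.mono hσ (by norm_num) le_rfl)).add
    (h₃.mono hσ (by norm_num) le_rfl)).mono hσ le_rfl ?_
  norm_num
  linarith

theorem symbolBoundAt_Phi (N : ℕ) (ε a₁ a₂ : ℝ) (hx : 0 ≤ x.2) {π : Fin n → Fin n → ℝ}
    {M : ℝ} (hπ : ∀ i j, |π i j| ≤ M) :
    SymbolBoundAt (shiftedNorm x) (3 - N)
      (|ε| * M * (8 * n ^ 2 * (2 * N + 1) * (N + 1 + 18 * |a₁| + 5 * |a₂|)))
      (Phi N ε a₁ a₂ π) x := by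
  have hσ := one_le_shiftedNorm hx
  have hσ₀ : 0 < shiftedNorm x := by linarith
  have hP := (symbolBoundAt_shiftedNormSq x).rpow (shiftedNormSq_eq_rpow_two x) hσ₀ (-(N / 2))
  refine ((((symbolBoundAt_quadForm hx hπ).mul hP hσ₀).mul
    (symbolBoundAt_bracketTerm N a₁ a₂ hx) hσ₀).const_mul ε).mono hσ (by linarith)
    (le_of_eq ?_)
  rw [abs_neg, abs_of_nonneg (by positivity : (0 : ℝ) ≤ N / 2)]
  ring

end HalfSpace

/-- pointwise decay of `Φ` and `∇Φ` on the closed upper half-space, with a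
constant depending only on `N`, `a₁`, `a₂`. -/
theorem Phi_pointwise_decay (N : ℕ) (hN : 4 ≤ N) (a₁ a₂ : ℝ) :
    ∃ C : ℝ, 0 < C ∧
      ∀ (ε : ℝ), 0 < ε → ∀ π : Fin (N - 1) → Fin (N - 1) → ℝ,
        (∀ i j, π i j = π j i) → (∑ i, π i i = 0) →
        ∀ Φ : HSp (N - 1) → ℝ,
          (∀ x : HSp (N - 1), Φ x =
            ε * (∑ i, ∑ j, π i j * x.1 i * x.1 j) /
                (‖x.1‖ ^ 2 + (x.2 + 1) ^ 2) ^ ((N : ℝ) / 2) *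
              (((N : ℝ) - 2) / 2 * (x.2 - 1)
                + a₁ * (x.2 + 1) / (‖x.1‖ ^ 2 + (x.2 + 1) ^ 2) ^ 2
                + a₂ / (‖x.1‖ ^ 2 + (x.2 + 1) ^ 2))) →
          ∀ x : HSp (N - 1), 0 ≤ x.2 →
            |Φ x| ≤ C * ε * (⨆ p : Fin (N - 1) × Fin (N - 1), |π p.1 p.2|)
                / (1 + rad x ^ (N - 3)) ∧
            ‖fderiv ℝ Φ x‖ ≤ C * ε * (⨆ p : Fin (N - 1) × Fin (N - 1), |π p.1 p.2|)
                / (1 + rad x ^ (N - 2)) := by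
  set K : ℝ := 8 * ((N - 1 : ℕ) : ℝ) ^ 2 * (2 * N + 1) * (N + 1 + 18 * |a₁| + 5 * |a₂|)
  have hn : (0 : ℝ) < ((N - 1 : ℕ) : ℝ) := by exact_mod_cast (by omega : 0 < N - 1)
  refine ⟨2 * K, by positivity, fun ε hε π _ _ Φ hΦ x hx => ?_⟩
  set M := ⨆ p : Fin (N - 1) × Fin (N - 1), |π p.1 p.2|
  have hπ (i j) : |π i j| ≤ M :=
    le_ciSup (f := fun p : Fin (N - 1) × Fin (N - 1) => |π p.1 p.2|)
      (Set.finite_range _).bddAbove (i, j)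
  obtain rfl : Φ = Phi N ε a₁ a₂ π := funext fun y => (hΦ y).trans (Phi_apply ..).symm
  have h := symbolBoundAt_Phi N ε a₁ a₂ hx hπ
  rw [abs_of_pos hε] at h
  have hσ := one_le_shiftedNorm hx
  have hK : 0 ≤ ε * M * K := h.const_nonneg (by linarith)
  have hr : 0 ≤ rad x := Real.sqrt_nonneg _
  have e₃ : (3 - N : ℝ) = -((N - 3 : ℕ) : ℝ) := by rw [Nat.cast_sub (by omega)]; push_cast; ring
  have e₂ : (3 - N : ℝ) - 1 = -((N - 2 : ℕ) : ℝ) := by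
    rw [Nat.cast_sub (by omega)]; push_cast; ring
  constructor
  · calc |Phi N ε a₁ a₂ π x| ≤ ε * M * K * shiftedNorm x ^ (3 - N : ℝ) := h.abs_le
      _ ≤ 2 * (ε * M * K) / (1 + rad x ^ (N - 3)) := by
          rw [e₃]; exact mul_rpow_neg_le_two_mul_div _ hσ hr (rad_le_shiftedNorm hx) hK
      _ = 2 * K * ε * M / (1 + rad x ^ (N - 3)) := by ring
  · calc ‖fderiv ℝ (Phi N ε a₁ a₂ π) x‖ ≤ ε * M * K * shiftedNorm x ^ ((3 - N : ℝ) - 1) :=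
          h.norm_fderiv_le
      _ ≤ 2 * (ε * M * K) / (1 + rad x ^ (N - 2)) := by
          rw [e₂]; exact mul_rpow_neg_le_two_mul_div _ hσ hr (rad_le_shiftedNorm hx) hK
      _ = 2 * K * ε * M / (1 + rad x ^ (N - 2)) := by ring
end
end

section
/- Let N = 4 and define Z⁰_{1,0}(x) = (1 − |x̄|² − x₄²)/(|x̄|² + (x₄+1)²)² (which equals −∂W_{λ,0}/∂λ at λ = 1). Then there exists a constant C > 0 such that for all R ≥ 2: | ∫_{B⁴_+(0,R)} W_{1,0}(x) Z⁰_{1,0}(x) dx + (π/4) |S²| log R | ≤ C, where B⁴_+(0,R) = {x ∈ ℝ⁴ : x₄ > 0, |x| < R} and |S²| = 4π is the surface area of the unit 2-sphere. In particular ∫_{B⁴_+(0,R)} W_{1,0} Z⁰_{1,0} dx = −(π/4)|S²| log R + O(1) as R → ∞. -/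
open MeasureTheory Filter Topology

noncomputable section

/-- The bubble `W_{1,0}` in dimension `N = 4`. -/
def W4 : HSp 3 → ℝ := fun x => 1 / (‖x.1‖ ^ 2 + (x.2 + 1) ^ 2)

/-- `Z⁰_{1,0}` in dimension `N = 4`. -/
def Z4 : HSp 3 → ℝ := fun x => (1 - ‖x.1‖ ^ 2 - x.2 ^ 2) / (‖x.1‖ ^ 2 + (x.2 + 1) ^ 2) ^ 2

/-!
Since `W = 1/q` with `q = |x̄|² + (x₄ + 1)² = |x|² + 2x₄ + 1`, one has
`W Z = 2 (x₄ + 1) W³ - W²`. The first term is `O(|x|⁻⁵)` and hence integrable over the whole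
half-space. The second is squeezed on `ℝ⁴₊` between the radial functions `(1 + |x|)⁻⁴` and
`(1 + |x|²)⁻²`; by reflection symmetry each of these integrates over `B⁴₊(0,R)` to half its
integral over the full ball, i.e. `π² ∫₀ᴿ r³ f(r) dr`, and both radial integrals are
`log R + O(1)`.
-/

open Set Real

section Radius

variable {n : ℕ}

lemma sq_rad (x : HSp n) : rad x ^ 2 = ‖x.1‖ ^ 2 + x.2 ^ 2 :=
  Real.sq_sqrt (by positivity)

@[fun_prop]
lemma continuous_rad : Continuous (rad : HSp n → ℝ) := by
  unfold rad; fun_prop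

lemma snd_le_rad (x : HSp n) : x.2 ≤ rad x :=
  Real.le_sqrt_of_sq_le (by nlinarith [sq_nonneg ‖x.1‖])

lemma norm_le_rad (x : HSp n) : ‖x‖ ≤ rad x := by
  refine max_le (Real.le_sqrt_of_sq_le ?_) (Real.le_sqrt_of_sq_le ?_)
  · nlinarith [sq_nonneg x.2]
  · rw [Real.norm_eq_abs, sq_abs]; nlinarith [sq_nonneg ‖x.1‖]

lemma rad_reflect (x : HSp n) : rad ((x.1, -x.2) : HSp n) = rad x := by
  simp only [rad, neg_sq]

end Radius

section EuclideanModel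

variable {n : ℕ}

instance : (volume : Measure (HSp n)).IsAddHaarMeasure := by
  rw [Measure.volume_eq_prod]; infer_instance

/- `HSp n` carries the sup norm of a product; `rad` is the norm of its image in `ℝⁿ⁺¹`
under this identification. -/
def euclideanEquivHSp (n : ℕ) : EuclideanSpace ℝ (Fin (n + 1)) ≃ᵐ HSp n :=
  (MeasurableEquiv.toLp 2 (Fin (n + 1) → ℝ)).symm.trans <|
    (MeasurableEquiv.piFinSuccAbove (fun _ => ℝ) (Fin.last n)).trans <|
      MeasurableEquiv.prodComm.trans <|
        MeasurableEquiv.prodCongr (MeasurableEquiv.toLp 2 (Fin n → ℝ)) (MeasurableEquiv.refl ℝ)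

lemma measurePreserving_euclideanEquivHSp :
    MeasurePreserving (euclideanEquivHSp n) volume volume :=
  ((((EuclideanSpace.volume_preserving_symm_measurableEquiv_toLp (Fin n)).symm _).prod
    (MeasurePreserving.id _)).comp Measure.measurePreserving_swap |>.comp
      (volume_preserving_piFinSuccAbove (fun _ => ℝ) (Fin.last n))).comp
    (EuclideanSpace.volume_preserving_symm_measurableEquiv_toLp (Fin (n + 1)))

lemma rad_euclideanEquivHSp (z : EuclideanSpace ℝ (Fin (n + 1))) :
    rad (euclideanEquivHSp n z) = ‖z‖ := by
  rw [EuclideanSpace.norm_eq, rad, EuclideanSpace.norm_eq, Real.sq_sqrt (by positivity),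
    Fin.sum_univ_castSucc]
  simp only [euclideanEquivHSp, MeasurableEquiv.trans_apply, MeasurableEquiv.toLp_symm_apply,
    MeasurableEquiv.piFinSuccAbove_apply, Fin.insertNthEquiv_last, Fin.snocEquiv_symm_apply,
    norm_eq_abs, sq_abs]
  rfl

lemma integral_fun_rad (f : ℝ → ℝ) :
    ∫ x : HSp n, f (rad x) = ∫ z : EuclideanSpace ℝ (Fin (n + 1)), f ‖z‖ := by
  rw [← measurePreserving_euclideanEquivHSp.integral_comp
    (euclideanEquivHSp n).measurableEmbedding]
  simp only [rad_euclideanEquivHSp]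

lemma integrable_fun_rad_iff {f : ℝ → ℝ} :
    Integrable (fun x : HSp n => f (rad x)) ↔
      Integrable (fun z : EuclideanSpace ℝ (Fin (n + 1)) => f ‖z‖) := by
  rw [← measurePreserving_euclideanEquivHSp.integrable_comp_emb
    (euclideanEquivHSp n).measurableEmbedding]
  simp only [Function.comp_def, rad_euclideanEquivHSp]

end EuclideanModel

section Reflection

variable {n : ℕ}

def reflectSnd (n : ℕ) : HSp n ≃ᵐ HSp n :=
  MeasurableEquiv.prodCongr (MeasurableEquiv.refl _) (MeasurableEquiv.neg ℝ)

@[simp]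
lemma reflectSnd_apply (x : HSp n) : reflectSnd n x = (x.1, -x.2) := rfl

lemma measurePreserving_reflectSnd : MeasurePreserving (reflectSnd n) volume volume :=
  (MeasurePreserving.id volume).prod (Measure.measurePreserving_neg volume)

lemma measurableSet_upperHalf : MeasurableSet (upperHalf n) :=
  measurableSet_lt measurable_const measurable_snd

lemma volume_snd_eq_zero : volume {x : HSp n | x.2 = 0} = 0 := by
  have : {x : HSp n | x.2 = 0} = univ ×ˢ {0} := by ext; simp
  rw [this, Measure.volume_eq_prod, Measure.prod_prod, Real.volume_singleton, mul_zero]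

lemma preimage_reflectSnd_upperHalf_ae_eq :
    reflectSnd n ⁻¹' upperHalf n =ᵐ[volume] ((upperHalf n)ᶜ : Set (HSp n)) := by
  refine ae_eq_set.2 ⟨measure_mono_null ?_ volume_snd_eq_zero,
    measure_mono_null ?_ volume_snd_eq_zero⟩ <;>
  · intro x ⟨h₁, h₂⟩
    simp only [upperHalf, mem_preimage, reflectSnd_apply, mem_compl_iff, mem_ofPred_eq,
      not_lt] at h₁ h₂ ⊢
    linarith

theorem setIntegral_upperHalf_of_symm {g : HSp n → ℝ} (hg : Integrable g)
    (hsymm : ∀ x, g (x.1, -x.2) = g x) :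
    ∫ x in upperHalf n, g x = (∫ x, g x) / 2 := by
  have hlower : ∫ x in (upperHalf n)ᶜ, g x = ∫ x in upperHalf n, g x := by
    rw [← setIntegral_congr_set preimage_reflectSnd_upperHalf_ae_eq,
      ← measurePreserving_reflectSnd.setIntegral_preimage_emb (reflectSnd n).measurableEmbedding g
        (upperHalf n)]
    exact setIntegral_congr_fun (measurableSet_upperHalf.preimage (reflectSnd n).measurable)
      fun x _ => (hsymm x).symm
  rw [← integral_add_compl measurableSet_upperHalf hg, hlower]
  ring

end Reflection

section HalfBall

variable {n : ℕ}

def upperHalfBall (n : ℕ) (R : ℝ) : Set (HSp n) := {x | 0 < x.2 ∧ rad x < R}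

lemma measurableSet_upperHalfBall (R : ℝ) : MeasurableSet (upperHalfBall n R) :=
  measurableSet_upperHalf.inter (measurableSet_lt continuous_rad.measurable measurable_const)

lemma pow_smul_indicator_Iio (f : ℝ → ℝ) (R : ℝ) :
    (fun y : ℝ => y ^ n • (Iio R).indicator f y) = (Iio R).indicator fun y => y ^ n * f y := by
  ext y; exact (indicator_mul_right (Iio R) (fun y : ℝ => y ^ n) f).symm

lemma integrable_indicator_fun_rad {f : ℝ → ℝ} {R : ℝ} (hf : ContinuousOn f (Icc 0 R)) :
    Integrable fun x : HSp n => (Iio R).indicator f (rad x) := by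
  rw [integrable_fun_rad_iff, integrable_fun_norm_addHaar, finrank_euclideanSpace_fin,
    Nat.add_sub_cancel, pow_smul_indicator_Iio, integrableOn_indicator_iff measurableSet_Iio,
    Iio_inter_Ioi]
  exact ((continuousOn_pow n).mul hf).integrableOn_Icc.mono_set Ioo_subset_Icc_self

lemma integrableOn_upperHalfBall_fun_rad {f : ℝ → ℝ} {R : ℝ} (hf : ContinuousOn f (Icc 0 R)) :
    IntegrableOn (fun x => f (rad x)) (upperHalfBall n R) := by
  have h := integrable_indicator_fun_rad (n := n) hf
  simp_rw [← indicator_comp_right rad] at h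
  rw [integrable_indicator_iff (measurableSet_Iio.preimage continuous_rad.measurable)] at h
  exact h.mono_set fun x hx => hx.2

theorem setIntegral_upperHalfBall_fun_rad {f : ℝ → ℝ} {R : ℝ} (hR : 0 ≤ R)
    (hf : ContinuousOn f (Icc 0 R)) :
    ∫ x in upperHalfBall n R, f (rad x) =
      (n + 1) * volume.real (Metric.ball (0 : EuclideanSpace ℝ (Fin (n + 1))) 1) / 2 *
        ∫ r in 0..R, r ^ n * f r := by
  have hind : ∀ x : HSp n, (Iio R).indicator f (rad x) = (rad ⁻¹' Iio R).indicator (f ∘ rad) x :=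
    fun x => (indicator_comp_right rad).symm
  calc ∫ x in upperHalfBall n R, f (rad x)
      = ∫ x in upperHalf n, (Iio R).indicator f (rad x) := by
        simp_rw [hind]
        rw [setIntegral_indicator (measurableSet_Iio.preimage continuous_rad.measurable)]
        rfl
    _ = (∫ x : HSp n, (Iio R).indicator f (rad x)) / 2 :=
        setIntegral_upperHalf_of_symm (integrable_indicator_fun_rad hf) fun x => by
          rw [rad_reflect]
    _ = (∫ z : EuclideanSpace ℝ (Fin (n + 1)), (Iio R).indicator f ‖z‖) / 2 := by
        rw [integral_fun_rad]
    _ = _ := by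
        rw [integral_fun_norm_addHaar, finrank_euclideanSpace_fin, Nat.add_sub_cancel,
          pow_smul_indicator_Iio, setIntegral_indicator measurableSet_Iio, Ioi_inter_Iio,
          intervalIntegral.integral_of_le hR, integral_Ioc_eq_integral_Ioo, nsmul_eq_mul,
          smul_eq_mul]
        push_cast
        ring

lemma volume_real_ball_euclideanSpace_four :
    volume.real (Metric.ball (0 : EuclideanSpace ℝ (Fin 4)) 1) = π ^ 2 / 2 := by
  rw [measureReal_def, InnerProductSpace.volume_ball_of_dim_even (k := 2)
    (by rw [finrank_euclideanSpace_fin])]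
  simp only [ENNReal.ofReal_one, one_pow, one_mul, Nat.factorial]
  exact ENNReal.toReal_ofReal (by positivity)

theorem setIntegral_upperHalfBall_fun_rad_four {f : ℝ → ℝ} {R : ℝ} (hR : 0 ≤ R)
    (hf : ContinuousOn f (Icc 0 R)) :
    ∫ x in upperHalfBall 3 R, f (rad x) = π ^ 2 * ∫ r in 0..R, r ^ 3 * f r := by
  rw [setIntegral_upperHalfBall_fun_rad hR hf, volume_real_ball_euclideanSpace_four]
  push_cast
  ring

end HalfBall

section RadialProfiles

lemma continuous_inv_one_add_sq_sq : Continuous fun r : ℝ => ((1 + r ^ 2)⁻¹) ^ 2 := by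
  fun_prop (disch := intro; positivity)

lemma continuousOn_inv_one_add_pow_four (R : ℝ) :
    ContinuousOn (fun r : ℝ => ((1 + r) ^ 4)⁻¹) (Icc 0 R) := fun r hr => by
  have : (1 + r) ^ 4 ≠ 0 := pow_ne_zero 4 (by linarith [hr.1])
  exact ContinuousAt.continuousWithinAt (by fun_prop (disch := assumption))

lemma integral_pow_three_mul_inv_one_add_sq_sq (R : ℝ) :
    ∫ r in 0..R, r ^ 3 * ((1 + r ^ 2)⁻¹) ^ 2 = (log (1 + R ^ 2) + (1 + R ^ 2)⁻¹ - 1) / 2 := by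
  have hderiv : ∀ r : ℝ, HasDerivAt (fun r => (log (1 + r ^ 2) + (1 + r ^ 2)⁻¹) / 2)
      (r ^ 3 * ((1 + r ^ 2)⁻¹) ^ 2) r := by
    intro r
    have hpos : (0 : ℝ) < 1 + r ^ 2 := by positivity
    have h : HasDerivAt (fun r : ℝ => 1 + r ^ 2) (2 * r) r := by
      simpa using (hasDerivAt_pow 2 r).const_add 1
    refine (((h.log hpos.ne').add (h.inv hpos.ne')).div_const 2).congr_deriv ?_
    field_simp
    ring
  rw [intervalIntegral.integral_eq_sub_of_hasDerivAt (fun r _ => hderiv r)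
    (((continuous_pow 3).mul continuous_inv_one_add_sq_sq).intervalIntegrable _ _)]
  norm_num
  ring

lemma integral_pow_three_mul_inv_one_add_sq_sq_le {R : ℝ} (hR : 1 ≤ R) :
    ∫ r in 0..R, r ^ 3 * ((1 + r ^ 2)⁻¹) ^ 2 ≤ log R + log 2 / 2 := by
  rw [integral_pow_three_mul_inv_one_add_sq_sq]
  have hlog : log (1 + R ^ 2) ≤ log 2 + 2 * log R := by
    rw [← log_rpow (by linarith), ← log_mul (by norm_num) (by positivity)]
    exact log_le_log (by positivity) (by norm_cast; nlinarith)
  have hinv : (1 + R ^ 2)⁻¹ ≤ 1 := inv_le_one_of_one_le₀ (by nlinarith)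
  linarith

lemma integral_pow_three_mul_inv_one_add_pow_four {R : ℝ} (hR : 0 ≤ R) :
    ∫ r in 0..R, r ^ 3 * ((1 + r) ^ 4)⁻¹ =
      log (1 + R) + 3 * (1 + R)⁻¹ - 3 / 2 * ((1 + R)⁻¹) ^ 2 + ((1 + R)⁻¹) ^ 3 / 3 - 11 / 6 := by
  have hderiv : ∀ r ∈ uIcc 0 R, HasDerivAt
      (fun r => log (1 + r) + 3 * (1 + r)⁻¹ - 3 / 2 * ((1 + r)⁻¹) ^ 2 + ((1 + r)⁻¹) ^ 3 / 3)
      (r ^ 3 * ((1 + r) ^ 4)⁻¹) r := by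
    intro r hr
    rw [uIcc_of_le hR] at hr
    have hne : 1 + r ≠ 0 := by linarith [hr.1]
    have h : HasDerivAt (fun r : ℝ => 1 + r) 1 r := (hasDerivAt_id' r).const_add 1
    have hi := h.inv hne
    refine ((((h.log hne).add (hi.const_mul 3)).sub ((hi.pow 2).const_mul (3 / 2))).add
      ((hi.pow 3).div_const 3)).congr_deriv ?_
    simp only [Pi.inv_apply]
    norm_num
    field_simp
    ring
  have hint : IntervalIntegrable (fun r : ℝ => r ^ 3 * ((1 + r) ^ 4)⁻¹) volume 0 R := by
    refine ContinuousOn.intervalIntegrable ?_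
    rw [uIcc_of_le hR]
    exact (continuousOn_pow 3).mul (continuousOn_inv_one_add_pow_four R)
  rw [intervalIntegral.integral_eq_sub_of_hasDerivAt hderiv hint]
  norm_num

lemma log_sub_le_integral_pow_three_mul_inv_one_add_pow_four {R : ℝ} (hR : 0 < R) :
    log R - 11 / 6 ≤ ∫ r in 0..R, r ^ 3 * ((1 + r) ^ 4)⁻¹ := by
  rw [integral_pow_three_mul_inv_one_add_pow_four hR.le]
  have hlog : log R ≤ log (1 + R) := log_le_log hR (by linarith)
  have hu : (1 + R)⁻¹ ≤ 1 := inv_le_one_of_one_le₀ (by linarith)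
  have hu₀ : 0 ≤ (1 + R)⁻¹ := by positivity
  nlinarith [pow_nonneg hu₀ 3]

end RadialProfiles

section Bubble

lemma W4_mul_Z4 (x : HSp 3) : W4 x * Z4 x = 2 * (x.2 + 1) * W4 x ^ 3 - W4 x ^ 2 := by
  rcases eq_or_ne (‖x.1‖ ^ 2 + (x.2 + 1) ^ 2) 0 with h | h
  · simp [W4, Z4, h]
  · simp only [W4, Z4]
    field_simp
    ring

lemma W4_nonneg (x : HSp 3) : 0 ≤ W4 x := by
  unfold W4; positivity

@[fun_prop]
lemma measurable_W4 : Measurable W4 := by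
  unfold W4; fun_prop

lemma W4_eq_inv (x : HSp 3) : W4 x = (rad x ^ 2 + 2 * x.2 + 1)⁻¹ := by
  rw [W4, sq_rad, one_div]; ring_nf

lemma inv_one_add_rad_pow_four_le_W4_sq {x : HSp 3} (hx : 0 < x.2) :
    ((1 + rad x) ^ 4)⁻¹ ≤ W4 x ^ 2 := by
  have h : rad x ^ 2 + 2 * x.2 + 1 ≤ (1 + rad x) ^ 2 := by nlinarith [snd_le_rad x]
  calc ((1 + rad x) ^ 4)⁻¹ = (((1 + rad x) ^ 2)⁻¹) ^ 2 := by
        rw [inv_pow, ← pow_mul]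
    _ ≤ W4 x ^ 2 := by
      rw [W4_eq_inv]
      exact pow_le_pow_left₀ (by positivity) (inv_anti₀ (by positivity) h) 2

lemma W4_sq_le_inv_one_add_rad_sq_sq {x : HSp 3} (hx : 0 < x.2) :
    W4 x ^ 2 ≤ ((1 + rad x ^ 2)⁻¹) ^ 2 := by
  refine pow_le_pow_left₀ (W4_nonneg x) ?_ 2
  rw [W4_eq_inv]
  exact inv_anti₀ (by positivity) (by linarith)

lemma two_mul_W4_pow_three_nonneg {x : HSp 3} (hx : 0 < x.2) : 0 ≤ 2 * (x.2 + 1) * W4 x ^ 3 := by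
  have := W4_nonneg x; positivity

lemma two_mul_W4_pow_three_le {x : HSp 3} (hx : 0 < x.2) :
    2 * (x.2 + 1) * W4 x ^ 3 ≤ 2 * (1 + ‖x‖ ^ 2) ^ (-5 / 2 : ℝ) := by
  set q := ‖x.1‖ ^ 2 + (x.2 + 1) ^ 2
  have hq : 1 + ‖x‖ ^ 2 ≤ q := by nlinarith [norm_le_rad x, norm_nonneg x, sq_rad x]
  have hq₀ : 0 < q := by positivity
  have hsqrt : x.2 + 1 ≤ q ^ (1 / 2 : ℝ) := by
    rw [← Real.sqrt_eq_rpow]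
    exact Real.le_sqrt_of_sq_le (by nlinarith [sq_nonneg ‖x.1‖])
  calc 2 * (x.2 + 1) * W4 x ^ 3 ≤ 2 * (q ^ (1 / 2 : ℝ) * (q⁻¹) ^ 3) := by
        rw [W4, one_div, mul_assoc]; gcongr
    _ = 2 * q ^ (-5 / 2 : ℝ) := by
        rw [← Real.rpow_natCast, Real.inv_rpow hq₀.le, ← Real.rpow_neg hq₀.le,
          ← Real.rpow_add hq₀]
        norm_num
    _ ≤ 2 * (1 + ‖x‖ ^ 2) ^ (-5 / 2 : ℝ) := by
        gcongr 2 * ?_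
        exact Real.rpow_le_rpow_of_nonpos (by positivity) hq (by norm_num)

lemma integrableOn_upperHalf_W4_pow_three :
    IntegrableOn (fun x => 2 * (x.2 + 1) * W4 x ^ 3) (upperHalf 3) := by
  have hdom : Integrable fun x : HSp 3 => 2 * (1 + ‖x‖ ^ 2) ^ (-5 / 2 : ℝ) :=
    (integrable_rpow_neg_one_add_norm_sq (by simp [Module.finrank_prod]; norm_num)).const_mul 2
  refine hdom.integrableOn.mono' (by fun_prop)
    ((ae_restrict_iff' measurableSet_upperHalf).2 (ae_of_all _ fun x hx => ?_))
  rw [Real.norm_of_nonneg (two_mul_W4_pow_three_nonneg hx)]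
  exact two_mul_W4_pow_three_le hx

lemma integrableOn_upperHalfBall_W4_sq (R : ℝ) :
    IntegrableOn (fun x => W4 x ^ 2) (upperHalfBall 3 R) := by
  refine (integrableOn_upperHalfBall_fun_rad continuous_inv_one_add_sq_sq.continuousOn).mono'
    (measurable_W4.pow_const 2).aestronglyMeasurable
    ((ae_restrict_iff' (measurableSet_upperHalfBall R)).2 (ae_of_all _ fun x hx => ?_))
  rw [Real.norm_of_nonneg (by positivity)]
  exact W4_sq_le_inv_one_add_rad_sq_sq hx.1

lemma setIntegral_upperHalfBall_W4_sq_le {R : ℝ} (hR : 1 ≤ R) :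
    ∫ x in upperHalfBall 3 R, W4 x ^ 2 ≤ π ^ 2 * (log R + log 2 / 2) := by
  have hf := continuous_inv_one_add_sq_sq.continuousOn (s := Icc 0 R)
  calc ∫ x in upperHalfBall 3 R, W4 x ^ 2
      ≤ ∫ x in upperHalfBall 3 R, ((1 + rad x ^ 2)⁻¹) ^ 2 :=
        setIntegral_mono_on (integrableOn_upperHalfBall_W4_sq R)
          (integrableOn_upperHalfBall_fun_rad hf) (measurableSet_upperHalfBall R)
          fun x hx => W4_sq_le_inv_one_add_rad_sq_sq hx.1
    _ = π ^ 2 * ∫ r in 0..R, r ^ 3 * ((1 + r ^ 2)⁻¹) ^ 2 :=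
        setIntegral_upperHalfBall_fun_rad_four (by linarith) hf
    _ ≤ π ^ 2 * (log R + log 2 / 2) := by
        gcongr; exact integral_pow_three_mul_inv_one_add_sq_sq_le hR

lemma le_setIntegral_upperHalfBall_W4_sq {R : ℝ} (hR : 0 < R) :
    π ^ 2 * (log R - 11 / 6) ≤ ∫ x in upperHalfBall 3 R, W4 x ^ 2 := by
  have hf := continuousOn_inv_one_add_pow_four R
  calc π ^ 2 * (log R - 11 / 6)
      ≤ π ^ 2 * ∫ r in 0..R, r ^ 3 * ((1 + r) ^ 4)⁻¹ := by
        gcongr; exact log_sub_le_integral_pow_three_mul_inv_one_add_pow_four hR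
    _ = ∫ x in upperHalfBall 3 R, ((1 + rad x) ^ 4)⁻¹ :=
        (setIntegral_upperHalfBall_fun_rad_four hR.le hf).symm
    _ ≤ ∫ x in upperHalfBall 3 R, W4 x ^ 2 :=
        setIntegral_mono_on (integrableOn_upperHalfBall_fun_rad hf)
          (integrableOn_upperHalfBall_W4_sq R) (measurableSet_upperHalfBall R)
          fun x hx => inv_one_add_rad_pow_four_le_W4_sq hx.1

end Bubble

/-- `∫_{B⁴₊(0,R)} W_{1,0} Z⁰_{1,0} dx = -(π/4)|S²| log R + O(1)` as `R → ∞`,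
with `|S²| = 4π`. -/
theorem integral_W4_Z4_log :
    ∃ C : ℝ, 0 < C ∧ ∀ R : ℝ, 2 ≤ R →
      |(∫ x in {x : HSp 3 | 0 < x.2 ∧ rad x < R}, W4 x * Z4 x)
          + Real.pi / 4 * (4 * Real.pi) * Real.log R| ≤ C := by
  set G := fun x : HSp 3 => 2 * (x.2 + 1) * W4 x ^ 3
  have hG := integrableOn_upperHalf_W4_pow_three
  have hCG : 0 ≤ ∫ x in upperHalf 3, G x :=
    setIntegral_nonneg measurableSet_upperHalf fun x hx => two_mul_W4_pow_three_nonneg hx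
  refine ⟨(∫ x in upperHalf 3, G x) + 2 * π ^ 2, by positivity, fun R hR => ?_⟩
  have hsub : upperHalfBall 3 R ⊆ upperHalf 3 := fun x hx => hx.1
  have hG₀ : 0 ≤ ∫ x in upperHalfBall 3 R, G x :=
    setIntegral_nonneg (measurableSet_upperHalfBall R) fun x hx =>
      two_mul_W4_pow_three_nonneg hx.1
  have hG₁ : ∫ x in upperHalfBall 3 R, G x ≤ ∫ x in upperHalf 3, G x :=
    setIntegral_mono_set hG ((ae_restrict_iff' measurableSet_upperHalf).2
      (ae_of_all _ fun x hx => two_mul_W4_pow_three_nonneg hx)) hsub.eventuallyLE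
  have hsplit : ∫ x in upperHalfBall 3 R, W4 x * Z4 x =
      (∫ x in upperHalfBall 3 R, G x) - ∫ x in upperHalfBall 3 R, W4 x ^ 2 := by
    simp_rw [W4_mul_Z4]
    exact integral_sub (hG.mono_set hsub) (integrableOn_upperHalfBall_W4_sq R)
  have hup := setIntegral_upperHalfBall_W4_sq_le (R := R) (by linarith)
  have hlow := le_setIntegral_upperHalfBall_W4_sq (R := R) (by linarith)
  have hlog2 : π ^ 2 * log 2 ≤ π ^ 2 * 2 := by gcongr; linarith [Real.log_two_lt_d9]
  change |(∫ x in upperHalfBall 3 R, W4 x * Z4 x) + π / 4 * (4 * π) * log R| ≤ _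
  rw [hsplit, abs_le]
  constructor <;> linarith
end
end
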